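/- Let A, B be real n×n matrices satisfying: (c1) A is entrywise nonnegative, (c2) B_{ij} ≤ A_{ij} for all i ≠ j, and (c3) there exists an entrywise positive vector u with (B−A)u entrywise positive. Set μ = ρ((B−A)⁻¹A) and ρ(A,B) = μ/(1+μ). Then for every real t with ρ(A,B) < t ≤ 1, the matrix tB − A is a nonsingular M-matrix. -/

import Mathlib

/-!
Write `C = B - A`. It is a Z-matrix with `C u > 0` for some `u > 0`, and such a matrix is
monotone (`C x ≥ 0 → x ≥ 0`), hence invertible with `C⁻¹ ≥ 0`; so `M = C⁻¹ A ≥ 0`.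
With `s = (1 - t) / t` we have `t B - A = t • C (1 - s M)`, and `ρ(A,B) < t` says exactly
`s μ < 1`. Then `1 - r M` is invertible for all `r ∈ [0, s]`, and following
`(1 - r M)⁻¹ u` along this segment shows `v = (1 - s M)⁻¹ u > 0`. Finally `t B - A` is a
Z-matrix with `(t B - A) v = t C u > 0`; writing it as `q • 1 - P` with `P ≥ 0`, the inequality
`P v < q v` bounds every eigenvalue of `P` by `q` in modulus.
-/

open Matrix

/-- Spectral radius of a real matrix: supremum of the absolute values of its
complex eigenvalues. -/
noncomputable def specRad {m : Type*} [Fintype m] [DecidableEq m] (M : Matrix m m ℝ) : ℝ :=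
  sSup ((fun z : ℂ => ‖z‖) '' spectrum ℂ (M.map (algebraMap ℝ ℂ)))

/-- Principal submatrix of `A` with rows and columns indexed by `J`. -/
def subm {n : ℕ} (A : Matrix (Fin n) (Fin n) ℝ) (J : Finset (Fin n)) :
    Matrix {i // i ∈ J} {i // i ∈ J} ℝ :=
  A.submatrix Subtype.val Subtype.val

/-- `X` is an M-matrix: `X = q•I − P` with `P ≥ 0` and `q ≥ ρ(P)`. -/
def IsMMatrix {m : Type*} [Fintype m] [DecidableEq m] (X : Matrix m m ℝ) : Prop :=
  ∃ q : ℝ, ∃ P : Matrix m m ℝ, (∀ i j, 0 ≤ P i j) ∧ X = q • 1 - P ∧ specRad P ≤ q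

/-- `X` is a nonsingular M-matrix: `X = q•I − P` with `P ≥ 0` and `q > ρ(P)`. -/
def IsNonsingMMatrix {m : Type*} [Fintype m] [DecidableEq m] (X : Matrix m m ℝ) : Prop :=
  ∃ q : ℝ, ∃ P : Matrix m m ℝ, (∀ i j, 0 ≤ P i j) ∧ X = q • 1 - P ∧ specRad P < q

variable {m : Type*}

def IsZMatrix (X : Matrix m m ℝ) : Prop :=
  ∀ i j, i ≠ j → X i j ≤ 0

lemma isZMatrix_smul_sub {A B : Matrix m m ℝ} (hA : ∀ i j, 0 ≤ A i j)
    (hBA : ∀ i j, i ≠ j → B i j ≤ A i j) {t : ℝ} (ht0 : 0 ≤ t) (ht1 : t ≤ 1) :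
    IsZMatrix (t • B - A) := fun i j hij => by
  have := mul_le_mul_of_nonneg_left (hBA i j hij) ht0
  simp only [Matrix.sub_apply, Matrix.smul_apply, smul_eq_mul]
  nlinarith [hA i j]

variable [Fintype m]

lemma exists_eq_mul_and_le_mul [Nonempty m] (f : m → ℝ) {u : m → ℝ} (hu : ∀ i, 0 < u i) :
    ∃ i c, f i = c * u i ∧ ∀ j, f j ≤ c * u j := by
  obtain ⟨i, -, hi⟩ := Finset.univ.exists_max_image (fun i => f i / u i) Finset.univ_nonempty
  exact ⟨i, f i / u i, (div_mul_cancel₀ _ (hu i).ne').symm,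
    fun j => (div_le_iff₀ (hu j)).mp (hi j (Finset.mem_univ j))⟩

lemma norm_lt_of_mulVec_lt {P : Matrix m m ℝ} (hP : ∀ i j, 0 ≤ P i j) {u : m → ℝ}
    (hu : ∀ i, 0 < u i) {q : ℝ} (hPu : ∀ i, (P *ᵥ u) i < q * u i) {z : ℂ} {w : m → ℂ}
    (hw0 : w ≠ 0) (hw : P.map (algebraMap ℝ ℂ) *ᵥ w = z • w) : ‖z‖ < q := by
  obtain ⟨k, hk⟩ := Function.ne_iff.mp hw0
  have : Nonempty m := ⟨k⟩
  obtain ⟨i, c, hi, hc⟩ := exists_eq_mul_and_le_mul (fun j => ‖w j‖) hu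
  have hc0 : 0 < c := pos_of_mul_pos_left ((norm_pos_iff.mpr hk).trans_le (hc k)) (hu k).le
  have key : ‖z‖ * (c * u i) < q * (c * u i) :=
    calc ‖z‖ * (c * u i) = ‖∑ j, (P i j : ℂ) * w j‖ := by
          rw [← hi, ← norm_mul]
          simpa [Matrix.mulVec, dotProduct] using congrArg norm (congrFun hw i).symm
      _ ≤ ∑ j, P i j * ‖w j‖ := by
          refine (norm_sum_le _ _).trans_eq (Finset.sum_congr rfl fun j _ => ?_)
          rw [norm_mul, Complex.norm_real, Real.norm_of_nonneg (hP i j)]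
      _ ≤ ∑ j, P i j * (c * u j) :=
          Finset.sum_le_sum fun j _ => mul_le_mul_of_nonneg_left (hc j) (hP i j)
      _ = c * (P *ᵥ u) i := by
          simp only [Matrix.mulVec, dotProduct, Finset.mul_sum]
          exact Finset.sum_congr rfl fun j _ => by ring
      _ < q * (c * u i) := by nlinarith [hPu i]
  exact lt_of_mul_lt_mul_right key (mul_pos hc0 (hu i)).le

section SpectralRadius

variable [DecidableEq m]

lemma specRad_nonneg (M : Matrix m m ℝ) : 0 ≤ specRad M :=
  Real.sSup_nonneg fun _ ⟨z, _, hz⟩ => hz ▸ norm_nonneg z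

lemma norm_le_specRad {M : Matrix m m ℝ} {z : ℂ}
    (hz : z ∈ spectrum ℂ (M.map (algebraMap ℝ ℂ))) : ‖z‖ ≤ specRad M :=
  le_csSup ((M.map (algebraMap ℝ ℂ)).finite_spectrum.image _).bddAbove ⟨z, hz, rfl⟩

lemma ofReal_mem_spectrum_map {M : Matrix m m ℝ} {x : ℝ} (hx : x ∈ spectrum ℝ M) :
    (x : ℂ) ∈ spectrum ℂ (M.map (algebraMap ℝ ℂ)) := by
  have hmap : algebraMap ℂ (Matrix m m ℂ) x - M.map (algebraMap ℝ ℂ)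
      = (algebraMap ℝ (Matrix m m ℝ) x - M).map (algebraMap ℝ ℂ) := by
    ext i j
    by_cases hij : i = j <;> simp [hij, Matrix.algebraMap_matrix_apply]
  rw [spectrum.mem_iff, Matrix.isUnit_iff_isUnit_det, isUnit_iff_ne_zero, not_not] at hx ⊢
  rw [hmap, ← RingHom.mapMatrix_apply, ← RingHom.map_det, hx, map_zero]

lemma isUnit_one_sub_smul_of_mul_specRad_lt {M : Matrix m m ℝ} {r : ℝ} (hr : 0 ≤ r)
    (hrM : r * specRad M < 1) : IsUnit (1 - r • M) := by
  rcases hr.eq_or_lt with rfl | hr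
  · simp
  by_contra hnu
  have hmem : r⁻¹ ∈ spectrum ℝ M := by
    rw [spectrum.mem_iff, Algebra.algebraMap_eq_smul_one]
    contrapose! hnu
    have hu : IsUnit (r • (1 : Matrix m m ℝ)) := by
      rw [← Algebra.algebraMap_eq_smul_one]
      exact (isUnit_iff_ne_zero.mpr hr.ne').map _
    convert hu.mul hnu using 1
    rw [smul_one_mul, smul_sub, smul_smul, mul_inv_cancel₀ hr.ne', one_smul]
  have hle := norm_le_specRad (ofReal_mem_spectrum_map hmem)
  rw [Complex.norm_real, Real.norm_eq_abs, abs_of_pos (inv_pos.mpr hr)] at hle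
  have := mul_le_mul_of_nonneg_left hle hr.le
  rw [mul_inv_cancel₀ hr.ne'] at this
  linarith

lemma exists_mulVec_eq_smul_of_mem_spectrum {K : Type*} [Field K] {N : Matrix m m K} {z : K}
    (hz : z ∈ spectrum K N) : ∃ w ≠ 0, N *ᵥ w = z • w := by
  rw [← Matrix.spectrum_toLin', ← Module.End.hasEigenvalue_iff_mem_spectrum] at hz
  obtain ⟨w, hw, hw0⟩ := hz.exists_hasEigenvector
  exact ⟨w, hw0, by simpa [Matrix.toLin'_apply] using Module.End.mem_eigenspace_iff.mp hw⟩

lemma specRad_lt_of_mulVec_lt {P : Matrix m m ℝ} (hP : ∀ i j, 0 ≤ P i j) {u : m → ℝ}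
    (hu : ∀ i, 0 < u i) {q : ℝ} (hPu : ∀ i, (P *ᵥ u) i < q * u i) (hq : 0 < q) :
    specRad P < q := by
  rw [specRad]
  rcases Set.eq_empty_or_nonempty ((‖·‖) '' spectrum ℂ (P.map (algebraMap ℝ ℂ))) with
    he | hne
  · rwa [he, Real.sSup_empty]
  rw [((P.map (algebraMap ℝ ℂ)).finite_spectrum.image _).csSup_lt_iff hne]
  rintro _ ⟨z, hz, rfl⟩
  obtain ⟨w, hw0, hw⟩ := exists_mulVec_eq_smul_of_mem_spectrum hz
  exact norm_lt_of_mulVec_lt hP hu hPu hw0 hw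

end SpectralRadius

namespace IsZMatrix

variable {C : Matrix m m ℝ} (hC : IsZMatrix C) {u : m → ℝ} (hu : ∀ i, 0 < u i)
  (hCu : ∀ i, 0 < (C *ᵥ u) i)
include hC hu hCu

lemma nonneg_of_mulVec_nonneg {x : m → ℝ} (hx : ∀ i, 0 ≤ (C *ᵥ x) i) (i : m) :
    0 ≤ x i := by
  by_contra! hxi
  have : Nonempty m := ⟨i⟩
  -- Scale `u` until `-c • u` touches `x` from below; at the contact row `Cx` becomes negative.
  obtain ⟨k, c, hk, hc⟩ := exists_eq_mul_and_le_mul (fun j => -x j) hu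
  have hc0 : 0 < c := pos_of_mul_pos_left ((neg_pos.mpr hxi).trans_le (hc i)) (hu i).le
  have hrow : ∀ j, C k j * x j ≤ C k j * (-(c * u j)) := by
    intro j
    rcases eq_or_ne j k with rfl | hjk
    · rw [← hk, neg_neg]
    · exact mul_le_mul_of_nonpos_left (by linarith [hc j]) (hC k j hjk.symm)
  have : (C *ᵥ x) k ≤ -(c * (C *ᵥ u) k) :=
    calc (C *ᵥ x) k = ∑ j, C k j * x j := rfl
      _ ≤ ∑ j, C k j * (-(c * u j)) := Finset.sum_le_sum fun j _ => hrow j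
      _ = -(c * (C *ᵥ u) k) := by
          simp only [Matrix.mulVec, dotProduct, Finset.mul_sum, ← Finset.sum_neg_distrib]
          exact Finset.sum_congr rfl fun j _ => by ring
  nlinarith [hx k, mul_pos hc0 (hCu k)]

variable [DecidableEq m]

lemma isUnit_det : IsUnit C.det := by
  rw [isUnit_iff_ne_zero]
  intro h0
  obtain ⟨w, hw0, hw⟩ := Matrix.exists_mulVec_eq_zero_iff.mpr h0
  refine hw0 (funext fun i =>
    le_antisymm ?_ (hC.nonneg_of_mulVec_nonneg hu hCu (by simp [hw]) i))
  have := hC.nonneg_of_mulVec_nonneg hu hCu (x := -w) (by simp [Matrix.mulVec_neg, hw]) i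
  simpa using this

lemma inv_nonneg (i j : m) : 0 ≤ C⁻¹ i j := by
  have hcol : C *ᵥ (C⁻¹ *ᵥ Pi.single j 1) = Pi.single j 1 := by
    rw [Matrix.mulVec_mulVec, Matrix.mul_nonsing_inv _ (hC.isUnit_det hu hCu), Matrix.one_mulVec]
  have := hC.nonneg_of_mulVec_nonneg hu hCu (fun k => by
    rw [hcol, Pi.single_apply]; split_ifs <;> norm_num) i
  simpa [Matrix.mulVec_single] using this

lemma isNonsingMMatrix : IsNonsingMMatrix C := by
  set q : ℝ := 1 + ∑ i, |C i i|
  have hdiag : ∀ i, C i i ≤ ∑ j, |C j j| := fun i => (le_abs_self _).trans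
    (Finset.single_le_sum (f := fun j => |C j j|) (fun j _ => abs_nonneg _) (Finset.mem_univ i))
  have hP : ∀ i j, 0 ≤ (q • 1 - C) i j := by
    intro i j
    rcases eq_or_ne i j with rfl | hij
    · simp only [Matrix.sub_apply, Matrix.smul_apply, Matrix.one_apply_eq, smul_eq_mul]
      linarith [hdiag i]
    · simp only [Matrix.sub_apply, Matrix.smul_apply, Matrix.one_apply_ne hij, smul_eq_mul]
      linarith [hC i j hij]
  have hPu : ∀ i, ((q • 1 - C) *ᵥ u) i < q * u i := fun i => by
    simp only [Matrix.sub_mulVec, Matrix.smul_mulVec, Matrix.one_mulVec, Pi.sub_apply,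
      Pi.smul_apply, smul_eq_mul]
    linarith [hCu i]
  have hq : 0 < q := by positivity
  exact ⟨q, q • 1 - C, hP, (sub_sub_cancel _ _).symm, specRad_lt_of_mulVec_lt hP hu hPu hq⟩

end IsZMatrix

section Resolvent

variable [DecidableEq m]

lemma continuousOn_one_sub_smul_inv_mulVec {M : Matrix m m ℝ} {s : Set ℝ}
    (hs : ∀ r ∈ s, IsUnit (1 - r • M)) (u : m → ℝ) :
    ContinuousOn (fun r : ℝ => (1 - r • M)⁻¹ *ᵥ u) s := by
  intro r hr
  have hinv : ContinuousAt (fun r : ℝ => (1 - r • M)⁻¹) r := by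
    refine (continuousAt_matrix_inv _ ?_).comp (by fun_prop)
    exact NormedRing.inverse_continuousAt
      ((Matrix.isUnit_iff_isUnit_det _).mp (hs r hr)).unit
  exact ((continuous_id.matrix_mulVec continuous_const).continuousAt.comp hinv).continuousWithinAt

lemma one_sub_smul_inv_mulVec_pos {M : Matrix m m ℝ} (hM : ∀ i j, 0 ≤ M i j) {u : m → ℝ}
    (hu : ∀ i, 0 < u i) {s : ℝ} (hs : 0 ≤ s) (hsM : s * specRad M < 1) (i : m) :
    0 < ((1 - s • M)⁻¹ *ᵥ u) i := by
  set G : ℝ → m → ℝ := fun r => (1 - r • M)⁻¹ *ᵥ u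
  have hunit : ∀ r ∈ Set.Icc 0 s, IsUnit (1 - r • M) := fun r hr =>
    isUnit_one_sub_smul_of_mul_specRad_lt hr.1
      ((mul_le_mul_of_nonneg_right hr.2 (specRad_nonneg M)).trans_lt hsM)
  -- Along the segment, `G r = u + r M (G r)`, so `G r ≥ 0` forces `G r > 0`: the set where
  -- `G > 0` is relatively clopen in `[0, s]` and contains `0`.
  have hpos_of_nonneg : ∀ r ∈ Set.Icc 0 s, (∀ j, 0 ≤ G r j) → ∀ j, 0 < G r j := by
    intro r hr hG j
    have hfix : G r = u + r • (M *ᵥ G r) := by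
      have : (1 - r • M) *ᵥ G r = u := by
        simp only [G, Matrix.mulVec_mulVec, Matrix.mul_nonsing_inv _
          ((Matrix.isUnit_iff_isUnit_det _).mp (hunit r hr)), Matrix.one_mulVec]
      rw [Matrix.sub_mulVec, Matrix.one_mulVec, Matrix.smul_mulVec] at this
      rw [← this, sub_add_cancel]
    have hMG : 0 ≤ (M *ᵥ G r) j := Finset.sum_nonneg fun k _ => mul_nonneg (hM j k) (hG k)
    rw [hfix]
    simpa using add_pos_of_pos_of_nonneg (hu j) (mul_nonneg hr.1 hMG)
  have : PreconnectedSpace (Set.Icc 0 s) := Subtype.preconnectedSpace isPreconnected_Icc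
  set g : Set.Icc 0 s → m → ℝ := fun r => G r
  have hg : Continuous g := (continuousOn_one_sub_smul_inv_mulVec hunit u).comp_continuous
    continuous_subtype_val Subtype.prop
  set K := g ⁻¹' Set.univ.pi fun _ => Set.Ioi (0 : ℝ)
  have hK : K = g ⁻¹' Set.univ.pi fun _ => Set.Ici 0 := by
    ext r
    simp only [K, Set.mem_preimage, Set.mem_univ_pi, Set.mem_Ioi, Set.mem_Ici]
    exact ⟨fun h j => (h j).le, hpos_of_nonneg r r.2⟩
  have hclopen : IsClopen K :=
    ⟨hK ▸ (isClosed_set_pi fun _ _ => isClosed_Ici).preimage hg,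
      (isOpen_set_pi Set.finite_univ fun _ _ => isOpen_Ioi).preimage hg⟩
  have h0 : (⟨0, Set.left_mem_Icc.mpr hs⟩ : Set.Icc 0 s) ∈ K := by
    simpa [K, g, G] using hu
  have hs_mem : (⟨s, Set.right_mem_Icc.mpr hs⟩ : Set.Icc 0 s) ∈ K :=
    hclopen.eq_univ ⟨_, h0⟩ ▸ Set.mem_univ _
  exact hs_mem i (Set.mem_univ i)

end Resolvent

lemma div_one_add_lt_iff_one_sub_div_mul_lt_one {μ t : ℝ} (hμ : 0 ≤ μ) (ht : 0 < t) :
    μ / (1 + μ) < t ↔ (1 - t) / t * μ < 1 := by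
  rw [div_lt_iff₀ (by linarith), div_mul_eq_mul_div, div_lt_one ht]
  constructor <;> intro h <;> linarith

lemma smul_sub_eq_smul_mul_one_sub [DecidableEq m] (A B : Matrix m m ℝ)
    (hdet : IsUnit (B - A).det) {t : ℝ} (ht : t ≠ 0) :
    t • B - A = t • ((B - A) * (1 - ((1 - t) / t) • ((B - A)⁻¹ * A))) := by
  rw [Matrix.mul_sub, Matrix.mul_one, Matrix.mul_smul, ← Matrix.mul_assoc,
    Matrix.mul_nonsing_inv _ hdet, Matrix.one_mul, smul_sub, smul_smul,
    mul_div_cancel₀ _ ht]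
  module

/-- Under (c1)–(c3), for every `t` with `ρ(A,B) < t ≤ 1`, the matrix `tB − A`
is a nonsingular M-matrix. -/
theorem stmt_5 {n : ℕ} (A B : Matrix (Fin n) (Fin n) ℝ)
    (hc1 : ∀ i j, 0 ≤ A i j)
    (hc2 : ∀ i j, i ≠ j → B i j ≤ A i j)
    (hc3 : ∃ u : Fin n → ℝ, (∀ i, 0 < u i) ∧ ∀ i, 0 < (B - A).mulVec u i)
    (μ ρAB : ℝ) (hμ : μ = specRad ((B - A)⁻¹ * A)) (hρ : ρAB = μ / (1 + μ)) :
    ∀ t : ℝ, ρAB < t → t ≤ 1 → IsNonsingMMatrix (t • B - A) := by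
  obtain ⟨u, hu, hCu⟩ := hc3
  intro t ht ht1
  have hZ : IsZMatrix (B - A) := by simpa using isZMatrix_smul_sub hc1 hc2 zero_le_one le_rfl
  have hM : ∀ i j, 0 ≤ ((B - A)⁻¹ * A) i j := fun i j => by
    rw [Matrix.mul_apply]
    exact Finset.sum_nonneg fun k _ => mul_nonneg (hZ.inv_nonneg hu hCu i k) (hc1 k j)
  have hμ0 : 0 ≤ μ := hμ ▸ specRad_nonneg _
  have ht0 : 0 < t := (div_nonneg hμ0 (by linarith)).trans_lt (hρ ▸ ht)
  have hs : 0 ≤ (1 - t) / t := div_nonneg (by linarith) ht0.le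
  have hsM : (1 - t) / t * specRad ((B - A)⁻¹ * A) < 1 :=
    hμ ▸ (div_one_add_lt_iff_one_sub_div_mul_lt_one hμ0 ht0).mp (hρ ▸ ht)
  have hres := (Matrix.isUnit_iff_isUnit_det _).mp (isUnit_one_sub_smul_of_mul_specRad_lt hs hsM)
  set v := (1 - ((1 - t) / t) • ((B - A)⁻¹ * A))⁻¹ *ᵥ u with hv
  have hXv : (t • B - A) *ᵥ v = t • ((B - A) *ᵥ u) := by
    rw [smul_sub_eq_smul_mul_one_sub A B (hZ.isUnit_det hu hCu) ht0.ne', Matrix.smul_mulVec,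
      ← Matrix.mulVec_mulVec, hv, Matrix.mulVec_mulVec u, Matrix.mul_nonsing_inv _ hres,
      Matrix.one_mulVec]
  refine (isZMatrix_smul_sub hc1 hc2 ht0.le ht1).isNonsingMMatrix
    (one_sub_smul_inv_mulVec_pos hM hu hs hsM) fun i => ?_
  rw [hXv, Pi.smul_apply, smul_eq_mul]
  exact mul_pos ht0 (hCu i)
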